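/- arXiv:0708.4172 — 2 statements merged into one kernel-verified Lean document; each statement's English description precedes it below -/
import Mathlib

section
/- Let ι : W → W ⊗ Λ²W be w ↦ (a,b,c) ↦ −2 g_{a[b} w_{c]} (i.e. ι(w) = ∑ᵢ eᵢ ⊗ (eᵢ ∧ w) up to sign conventions), let σ : Λ²W ⊗ Λ•W → Λ•W be the spin action σ(v∧w ⊗ e) = −(1/8)(v.w.e − w.v.e), and let ε(v ⊗ e) = v.e. Then the composition W ⊗ Λ•W → W ⊗ Λ²W ⊗ Λ•W → W ⊗ Λ•W → Λ•W given by (ι ⊗ Id), (Id ⊗ σ), ε equals −((n−1)/2)·ε. -/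
/-!
Writing `v.e` for `cliffordAction v e`, the Clifford relation `v.u.e + u.v.e = −2⟨v,u⟩ e` gives
`∑ᵢ bᵢ.bᵢ.e = −n e` and, for an orthonormal basis, `∑ᵢ bᵢ.w.bᵢ.e = (n − 2) w.e`. Expanding the
spin action, the left-hand side is `¼ (∑ᵢ bᵢ.bᵢ.(w.e) − ∑ᵢ bᵢ.w.bᵢ.e) = ¼ (−n − (n − 2)) w.e`.
-/

noncomputable section

open scoped InnerProductSpace

/-- The Clifford-type action `ε(v ⊗ e) = v.e = v ∧ e − v ⌟ e` on the exterior algebra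
of `ℝⁿ`. -/
def cliffordAction {n : ℕ} (v : EuclideanSpace ℝ (Fin n))
    (ω : ExteriorAlgebra ℝ (EuclideanSpace ℝ (Fin n))) :
    ExteriorAlgebra ℝ (EuclideanSpace ℝ (Fin n)) :=
  ExteriorAlgebra.ι ℝ v * ω
    - CliffordAlgebra.contractLeft (innerₗ (EuclideanSpace ℝ (Fin n)) v) ω

/-- The spin action `σ(v ∧ w ⊗ e) = −(1/8)(v.w.e − w.v.e)` of a simple bivector. -/
def spinAction {n : ℕ} (v w : EuclideanSpace ℝ (Fin n))
    (e : ExteriorAlgebra ℝ (EuclideanSpace ℝ (Fin n))) :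
    ExteriorAlgebra ℝ (EuclideanSpace ℝ (Fin n)) :=
  (-(1/8 : ℝ)) • (cliffordAction v (cliffordAction w e)
    - cliffordAction w (cliffordAction v e))

section CliffordAction

variable {n : ℕ} (v u w : EuclideanSpace ℝ (Fin n))
  (e f : ExteriorAlgebra ℝ (EuclideanSpace ℝ (Fin n)))

lemma cliffordAction_smul_right (r : ℝ) :
    cliffordAction v (r • e) = r • cliffordAction v e := by
  rw [cliffordAction, cliffordAction, map_smul, mul_smul_comm, smul_sub]

lemma cliffordAction_sub_right :
    cliffordAction v (e - f) = cliffordAction v e - cliffordAction v f := by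
  simp only [cliffordAction, map_sub, mul_sub]
  abel

lemma cliffordAction_smul_left (r : ℝ) :
    cliffordAction (r • v) e = r • cliffordAction v e := by
  simp only [cliffordAction, map_smul, smul_mul_assoc, LinearMap.smul_apply, smul_sub]

lemma cliffordAction_sum_left {ι : Type*} (s : Finset ι) (x : ι → EuclideanSpace ℝ (Fin n)) :
    cliffordAction (∑ i ∈ s, x i) e = ∑ i ∈ s, cliffordAction (x i) e := by
  simp only [cliffordAction, map_sum, Finset.sum_mul, LinearMap.sum_apply,
    Finset.sum_sub_distrib]

lemma cliffordAction_anticomm :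
    cliffordAction v (cliffordAction u e) + cliffordAction u (cliffordAction v e)
      = (-2 * ⟪v, u⟫_ℝ) • e := by
  simp only [cliffordAction, mul_sub, map_sub, CliffordAlgebra.contractLeft_ι_mul,
    innerₗ_apply_apply]
  have wedge_anticomm : ExteriorAlgebra.ι ℝ v * (ExteriorAlgebra.ι ℝ u * e)
      = -(ExteriorAlgebra.ι ℝ u * (ExteriorAlgebra.ι ℝ v * e)) := by
    rw [← mul_assoc, ← mul_assoc, ← neg_mul,
      neg_eq_of_add_eq_zero_left (ExteriorAlgebra.ι_add_mul_swap v u)]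
  rw [wedge_anticomm, CliffordAlgebra.contractLeft_comm, real_inner_comm u v]
  module

lemma cliffordAction_self :
    cliffordAction v (cliffordAction v e) = (-⟪v, v⟫_ℝ) • e := by
  have twice :
      (2 : ℝ) • cliffordAction v (cliffordAction v e) = (2 : ℝ) • ((-⟪v, v⟫_ℝ) • e) := by
    rw [two_smul, cliffordAction_anticomm, smul_smul]
    ring_nf
  exact smul_right_injective _ two_ne_zero twice

variable (b : OrthonormalBasis (Fin n) ℝ (EuclideanSpace ℝ (Fin n)))

lemma OrthonormalBasis.sum_inner_smul_cliffordAction :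
    ∑ i, ⟪b i, w⟫_ℝ • cliffordAction (b i) e = cliffordAction w e := by
  simp only [← cliffordAction_smul_left, ← cliffordAction_sum_left, b.sum_repr']

lemma OrthonormalBasis.sum_cliffordAction_self :
    ∑ i, cliffordAction (b i) (cliffordAction (b i) e) = (-(n : ℝ)) • e := by
  simp only [cliffordAction_self, b.inner_eq_one, Finset.sum_const, Finset.card_univ,
    Fintype.card_fin]
  module

lemma OrthonormalBasis.sum_cliffordAction_sandwich :
    ∑ i, cliffordAction (b i) (cliffordAction w (cliffordAction (b i) e))
      = ((n : ℝ) - 2) • cliffordAction w e := by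
  have sandwich : ∀ i, cliffordAction (b i) (cliffordAction w (cliffordAction (b i) e))
      = (-2 * ⟪b i, w⟫_ℝ) • cliffordAction (b i) e + cliffordAction w e := by
    intro i
    have h := cliffordAction_anticomm (b i) w (cliffordAction (b i) e)
    rw [cliffordAction_self, b.inner_eq_one, cliffordAction_smul_right] at h
    linear_combination (norm := module) h
  simp only [sandwich, Finset.sum_add_distrib, mul_smul, ← Finset.smul_sum,
    b.sum_inner_smul_cliffordAction, Finset.sum_const, Finset.card_univ, Fintype.card_fin]
  module

end CliffordAction

/-- Here `ι(w) = ∑ᵢ bᵢ ⊗ (−2 bᵢ∧w)`, so the left-hand side is `ε ∘ (Id ⊗ σ) ∘ (ι ⊗ Id)`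
applied to `w ⊗ e`. -/
theorem iota_spin_epsilon_composition {n : ℕ}
    (b : OrthonormalBasis (Fin n) ℝ (EuclideanSpace ℝ (Fin n)))
    (w : EuclideanSpace ℝ (Fin n))
    (e : ExteriorAlgebra ℝ (EuclideanSpace ℝ (Fin n))) :
    ∑ i : Fin n, (-2 : ℝ) • cliffordAction (b i) (spinAction (b i) w e)
      = (-(((n : ℝ) - 1) / 2)) • cliffordAction w e := by
  have expand : ∀ i, (-2 : ℝ) • cliffordAction (b i) (spinAction (b i) w e)
      = (1 / 4 : ℝ) • (cliffordAction (b i) (cliffordAction (b i) (cliffordAction w e))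
        - cliffordAction (b i) (cliffordAction w (cliffordAction (b i) e))) := by
    intro i
    rw [spinAction, cliffordAction_smul_right, cliffordAction_sub_right, smul_smul]
    norm_num
  simp only [expand, ← Finset.smul_sum, Finset.sum_sub_distrib, b.sum_cliffordAction_self,
    b.sum_cliffordAction_sandwich]
  module
end
end

section
/- Suppose E and F are representations of SO(n), π : W ⊗ E → F is an SO(n)-module homomorphism, ρ : Λ²W ⊗ E → E is the Lie algebra action, and ι : W → W ⊗ Λ²W is w_a ↦ −2g_{a[b}w_{c]}. If the composition π ∘ (Id ⊗ ρ) ∘ (ι ⊗ Id) : W ⊗ E → F equals w·π for a constant w, then for the associated bundles on a conformal manifold (induced from orthonormal frames of Λ¹[1]), the first-order operator D = π∘∇ : E[w] → F[w−1] is conformally invariant: it is independent of the choice of metric in the conformal class. -/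
open scoped TensorProduct InnerProductSpace

namespace TensorProduct

variable {R W E F : Type*} [CommRing R] [AddCommGroup W] [Module R W]
  [AddCommGroup E] [Module R E] [AddCommGroup F] [Module R F]

theorem lift_add_smul_tmul_sub_eq_of_lift_eq (π : W →ₗ[R] E →ₗ[R] F) (ξ Γ : W ⊗[R] E)
    (v : W) (e : E) (w : R) (hΓ : lift π Γ = w • π v e) :
    lift π (ξ + w • (v ⊗ₜ[R] e) - Γ) = lift π ξ := by
  rw [map_sub, map_add, map_smul, lift.tmul, hΓ, add_sub_cancel_right]

theorem lift_sum_tmul {ι : Type*} (s : Finset ι) (π : W →ₗ[R] E →ₗ[R] F) (v : ι → W)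
    (e : ι → E) : lift π (∑ a ∈ s, v a ⊗ₜ[R] e a) = ∑ a ∈ s, π (v a) (e a) := by
  simp only [map_sum, lift.tmul]

end TensorProduct

theorem first_order_conformally_invariant_operator_general
    {n : ℕ} {M E F : Type*}
    [AddCommGroup E] [Module ℝ E] [AddCommGroup F] [Module ℝ F]
    -- the bivector actions on E and F (on simple bivectors t∧u), bilinear and
    -- antisymmetric:
    (ρE : EuclideanSpace ℝ (Fin n) →ₗ[ℝ] EuclideanSpace ℝ (Fin n) →ₗ[ℝ] Module.End ℝ E)
    -- π : W ⊗ E → F (curried) is an so(n)-module homomorphism: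
    (π : EuclideanSpace ℝ (Fin n) →ₗ[ℝ] E →ₗ[ℝ] F)
    -- the composition π ∘ (Id⊗ρ) ∘ (ι⊗Id) equals w·π:
    (w : ℝ)
    (hw : ∀ (v : EuclideanSpace ℝ (Fin n)) (φ : E),
      ∑ a : Fin n, (-2 : ℝ) •
          π (EuclideanSpace.basisFun (Fin n) ℝ a)
            (ρE (EuclideanSpace.basisFun (Fin n) ℝ a) v φ)
        = w • π v φ)
    -- the two connections on E[w], related by the conformal change formula with
    -- conformal 1-form Υ:
    (Υ : M → EuclideanSpace ℝ (Fin n))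
    (conn connHat : (M → E) → M → (EuclideanSpace ℝ (Fin n) ⊗[ℝ] E))
    (hconf : ∀ (φ : M → E) (x : M),
      connHat φ x = conn φ x + w • (Υ x ⊗ₜ[ℝ] φ x)
        - ∑ a : Fin n, (EuclideanSpace.basisFun (Fin n) ℝ a) ⊗ₜ[ℝ]
            ((-2 : ℝ) • ρE (EuclideanSpace.basisFun (Fin n) ℝ a) (Υ x) (φ x))) :
    -- conclusion: D = π∘∇ is independent of the choice of metric:
    ∀ (φ : M → E) (x : M),
      TensorProduct.lift π (connHat φ x) = TensorProduct.lift π (conn φ x) := by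
  intro φ x
  rw [hconf]
  refine TensorProduct.lift_add_smul_tmul_sub_eq_of_lift_eq π _ _ (Υ x) (φ x) w ?_
  rw [TensorProduct.lift_sum_tmul, ← hw]
  simp only [map_smul]

/-- **Fundamental theorem on first order conformally invariant operators.**
`W = ℝⁿ` is the (co)tangent representation, `E`, `F` are `SO(n)`- (equivalently,
`so(n)`-) modules with actions `ρE`, `ρF` given on simple bivectors (`ρE t u` is the
action of `t∧u`), `π : W ⊗ E → F` is an `SO(n)`-module homomorphism, and
`ι : W → W ⊗ Λ²W` is `w_a ↦ −2g_{a[b}w_{c]}`, i.e. `ι(w) = ∑ₐ eₐ ⊗ (−2 eₐ∧w)`.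
Sections of the associated bundles are modelled in a local trivialisation as maps
`M → E`; the connections `∇` and `∇̂` induced by two conformally related metrics
`ĝ = Ω²g` act on sections of `E[w]` and differ by `∇̂φ = ∇φ + wΥ⊗φ − Γφ`, where
`Γφ = (Id⊗ρ)((ι Υ)⊗φ) = ∑ₐ eₐ ⊗ (−2 ρE(eₐ, Υ) φ)`.  If the composition
`π ∘ (Id⊗ρ) ∘ (ι⊗Id)` equals `w·π`, then the operator `D = π∘∇ : E[w] → F[w−1]` is
conformally invariant: `π∘∇̂ = π∘∇` regardless of the choice of metric in the
conformal class. -/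
theorem first_order_conformally_invariant_operator
    {n : ℕ} {M E F : Type*}
    [AddCommGroup E] [Module ℝ E] [AddCommGroup F] [Module ℝ F]
    -- the bivector actions on E and F (on simple bivectors t∧u), bilinear and
    -- antisymmetric:
    (ρE : EuclideanSpace ℝ (Fin n) →ₗ[ℝ] EuclideanSpace ℝ (Fin n) →ₗ[ℝ] Module.End ℝ E)
    (ρF : EuclideanSpace ℝ (Fin n) →ₗ[ℝ] EuclideanSpace ℝ (Fin n) →ₗ[ℝ] Module.End ℝ F)
    (hρEalt : ∀ t, ρE t t = 0) (hρFalt : ∀ t, ρF t t = 0)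
    -- π : W ⊗ E → F (curried) is an so(n)-module homomorphism:
    (π : EuclideanSpace ℝ (Fin n) →ₗ[ℝ] E →ₗ[ℝ] F)
    (hπequiv : ∀ (t u v : EuclideanSpace ℝ (Fin n)) (e : E),
      π ((1/2 : ℝ) • (⟪u, v⟫_ℝ • t - ⟪t, v⟫_ℝ • u)) e + π v (ρE t u e)
        = ρF t u (π v e))
    -- the composition π ∘ (Id⊗ρ) ∘ (ι⊗Id) equals w·π:
    (w : ℝ)
    (hw : ∀ (v : EuclideanSpace ℝ (Fin n)) (φ : E),
      ∑ a : Fin n, (-2 : ℝ) •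
          π (EuclideanSpace.basisFun (Fin n) ℝ a)
            (ρE (EuclideanSpace.basisFun (Fin n) ℝ a) v φ)
        = w • π v φ)
    -- the two connections on E[w], related by the conformal change formula with
    -- conformal 1-form Υ:
    (Υ : M → EuclideanSpace ℝ (Fin n))
    (conn connHat : (M → E) → M → (EuclideanSpace ℝ (Fin n) ⊗[ℝ] E))
    (hconf : ∀ (φ : M → E) (x : M),
      connHat φ x = conn φ x + w • (Υ x ⊗ₜ[ℝ] φ x)
        - ∑ a : Fin n, (EuclideanSpace.basisFun (Fin n) ℝ a) ⊗ₜ[ℝ]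
            ((-2 : ℝ) • ρE (EuclideanSpace.basisFun (Fin n) ℝ a) (Υ x) (φ x))) :
    -- conclusion: D = π∘∇ is independent of the choice of metric:
    ∀ (φ : M → E) (x : M),
      TensorProduct.lift π (connHat φ x) = TensorProduct.lift π (conn φ x) :=
  first_order_conformally_invariant_operator_general ρE π w hw Υ conn connHat hconf
end
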